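/- Let X ∈ ℝⁿ be a column vector with X'GX ≠ 0. Then, as ξ → 0⁺, the rescaled matrix ν(ξ)·Σ(ξ)^{-1}X(X'Σ(ξ)^{-1}X)^{-1}X'Σ(ξ)^{-1} converges entrywise to H = GXX'G/(X'GX), and H ≠ 0. -/

import Mathlib

open Matrix Filter Topology

/-- The all-ones vector. -/
def ones (n : ℕ) : Fin n → ℝ := fun _ => 1

/-- G = D⁻¹ − D⁻¹11'D⁻¹/(1'D⁻¹1). -/
noncomputable def Gmat {n : ℕ} (D : Matrix (Fin n) (Fin n) ℝ) : Matrix (Fin n) (Fin n) ℝ :=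
  D⁻¹ - (ones n ⬝ᵥ D⁻¹.mulVec (ones n))⁻¹ • (D⁻¹ * vecMulVec (ones n) (ones n) * D⁻¹)

/-- H = GXX'G/(X'GX). -/
noncomputable def Hmat {n : ℕ} (D : Matrix (Fin n) (Fin n) ℝ) (X : Fin n → ℝ) :
    Matrix (Fin n) (Fin n) ℝ :=
  (X ⬝ᵥ (Gmat D).mulVec X)⁻¹ • (Gmat D * vecMulVec X X * Gmat D)

/-!
By the Sherman–Morrison formula, with `M = D + E`,
`ν Σ⁻¹ = M⁻¹ - (ν + 1'M⁻¹1)⁻¹ M⁻¹11'M⁻¹`, which tends to `G` as `ν → 0` and `M → D`.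
The matrix `P X (X'PX)⁻¹ X'P` is homogeneous of degree one in `P` and continuous wherever
`X'PX ≠ 0`, so `ν Σ⁻¹X(X'Σ⁻¹X)⁻¹X'Σ⁻¹` tends to its value at `P = G`, which is `H`.
Finally `H` is a nonzero multiple of the outer product of `GX` and `X'G`, and neither factor
vanishes because `X'GX ≠ 0`.
-/

namespace Matrix

theorem vecMulVec_mul_mul_vecMulVec {m R : Type*} [Fintype m] [CommSemiring R] (u v : m → R)
    (A : Matrix m m R) :
    vecMulVec u v * A * vecMulVec u v = (v ⬝ᵥ A *ᵥ u) • vecMulVec u v := by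
  rw [vecMulVec_mul, vecMulVec_mul_vecMulVec, vecMulVec_smul, dotProduct_mulVec]

variable {m K : Type*} [Fintype m] [Field K]

/-- For `P = Σ⁻¹` this is the generalized least squares matrix `Σ⁻¹X(X'Σ⁻¹X)⁻¹X'Σ⁻¹`. -/
noncomputable def glsMatrix (X : m → K) (P : Matrix m m K) : Matrix m m K :=
  (X ⬝ᵥ P *ᵥ X)⁻¹ • (P * vecMulVec X X * P)

theorem glsMatrix_smul (X : m → K) (c : K) (P : Matrix m m K) :
    glsMatrix X (c • P) = c • glsMatrix X P := by
  rcases eq_or_ne c 0 with rfl | hc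
  · simp [glsMatrix]
  simp only [glsMatrix, smul_mulVec, dotProduct_smul, Matrix.smul_mul, Matrix.mul_smul, smul_smul,
    smul_eq_mul, mul_inv]
  congr 1
  field_simp

theorem glsMatrix_ne_zero {X : m → K} {P : Matrix m m K} (h : X ⬝ᵥ P *ᵥ X ≠ 0) :
    glsMatrix X P ≠ 0 := by
  have hPX : P *ᵥ X ≠ 0 := fun h0 => h (by rw [h0, dotProduct_zero])
  have hXP : X ᵥ* P ≠ 0 := fun h0 => h (by rw [dotProduct_mulVec, h0, zero_dotProduct])
  rw [glsMatrix, mul_vecMulVec, vecMulVec_mul]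
  exact smul_ne_zero (inv_ne_zero h) (vecMulVec_eq_zero.not.2 (not_or.2 ⟨hPX, hXP⟩))

theorem continuousAt_glsMatrix [TopologicalSpace K] [IsTopologicalDivisionRing K] {X : m → K}
    {P : Matrix m m K} (h : X ⬝ᵥ P *ᵥ X ≠ 0) : ContinuousAt (glsMatrix X) P :=
  ((continuous_const.dotProduct (continuous_id.matrix_mulVec continuous_const)).continuousAt.inv₀
    h).smul ((continuous_id.matrix_mul continuous_const).matrix_mul continuous_id).continuousAt

variable [DecidableEq m]

/-- The **Sherman–Morrison formula**. -/
theorem inv_add_vecMulVec {A : Matrix m m K} (hA : IsUnit A.det) {u v : m → K}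
    (h : 1 + v ⬝ᵥ A⁻¹ *ᵥ u ≠ 0) :
    (A + vecMulVec u v)⁻¹ =
      A⁻¹ - (1 + v ⬝ᵥ A⁻¹ *ᵥ u)⁻¹ • (A⁻¹ * vecMulVec u v * A⁻¹) := by
  refine inv_eq_right_inv ?_
  have hP : vecMulVec u v * (A⁻¹ * vecMulVec u v * A⁻¹) =
      (v ⬝ᵥ A⁻¹ *ᵥ u) • (vecMulVec u v * A⁻¹) := by
    rw [← Matrix.mul_assoc, ← Matrix.mul_assoc, vecMulVec_mul_mul_vecMulVec, smul_mul]
  have hA' : A * (A⁻¹ * vecMulVec u v * A⁻¹) = vecMulVec u v * A⁻¹ := by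
    rw [← Matrix.mul_assoc, ← Matrix.mul_assoc, mul_nonsing_inv A hA, Matrix.one_mul]
  rw [Matrix.add_mul, Matrix.mul_sub, Matrix.mul_sub, Matrix.mul_smul, Matrix.mul_smul, hP, hA',
    mul_nonsing_inv A hA, smul_smul]
  linear_combination (norm := module) -(inv_mul_cancel₀ h) • (vecMulVec u v * A⁻¹)

theorem smul_inv_vecMulVec_add_smul {A : Matrix m m K} (hA : IsUnit A.det) {u v : m → K}
    {t : K} (ht : t ≠ 0) (h : t + v ⬝ᵥ A⁻¹ *ᵥ u ≠ 0) :
    t • (vecMulVec u v + t • A)⁻¹ =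
      A⁻¹ - (t + v ⬝ᵥ A⁻¹ *ᵥ u)⁻¹ • (A⁻¹ * vecMulVec u v * A⁻¹) := by
  have htA : (t • A)⁻¹ = t⁻¹ • A⁻¹ := inv_smul' A (Units.mk0 t ht) hA
  have hdet : IsUnit (t • A).det := by
    rw [det_smul]
    exact (isUnit_iff_ne_zero.2 (pow_ne_zero _ ht)).mul hA
  have hc : t + v ⬝ᵥ A⁻¹ *ᵥ u = t * (1 + v ⬝ᵥ (t • A)⁻¹ *ᵥ u) := by
    rw [htA, smul_mulVec, dotProduct_smul, smul_eq_mul]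
    field_simp
  rw [add_comm, inv_add_vecMulVec hdet (right_ne_zero_of_mul (hc ▸ h)), hc, htA]
  simp only [Matrix.smul_mul, Matrix.mul_smul, smul_sub, smul_smul, mul_inv]
  rw [mul_inv_cancel₀ ht, one_smul]
  congr 2
  field_simp

theorem tendsto_smul_inv_vecMulVec_add_smul [TopologicalSpace K] [IsTopologicalDivisionRing K]
    [T1Space K] {α : Type*} {l : Filter α} {t : α → K} {A : α → Matrix m m K}
    {A₀ : Matrix m m K} {u v : m → K} (ht : Tendsto t l (𝓝 0)) (ht₀ : ∀ᶠ a in l, t a ≠ 0)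
    (hA : Tendsto A l (𝓝 A₀)) (hA₀ : IsUnit A₀.det) (huv : v ⬝ᵥ A₀⁻¹ *ᵥ u ≠ 0) :
    Tendsto (fun a => t a • (vecMulVec u v + t a • A a)⁻¹) l
      (𝓝 (A₀⁻¹ - (v ⬝ᵥ A₀⁻¹ *ᵥ u)⁻¹ • (A₀⁻¹ * vecMulVec u v * A₀⁻¹))) := by
  have hinv : Tendsto (fun a => (A a)⁻¹) l (𝓝 A₀⁻¹) :=
    (continuousAt_matrix_inv A₀ (by
      rw [Ring.inverse_eq_inv']
      exact continuousAt_inv₀ hA₀.ne_zero)).tendsto.comp hA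
  have hdet : Tendsto (fun a => (A a).det) l (𝓝 A₀.det) :=
    (continuous_id.matrix_det.tendsto A₀).comp hA
  have hs : Tendsto (fun a => t a + v ⬝ᵥ (A a)⁻¹ *ᵥ u) l (𝓝 (v ⬝ᵥ A₀⁻¹ *ᵥ u)) := by
    simpa using ht.add (((continuous_const.dotProduct
      (continuous_id.matrix_mulVec continuous_const)).tendsto A₀⁻¹).comp hinv)
  refine (hinv.sub ((hs.inv₀ huv).smul ((hinv.mul tendsto_const_nhds).mul hinv))).congr' ?_
  filter_upwards [ht₀, hdet.eventually_ne hA₀.ne_zero, hs.eventually_ne huv]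
    with a hta hdeta hsa
  exact (smul_inv_vecMulVec_add_smul (isUnit_iff_ne_zero.2 hdeta) hta hsa).symm

end Matrix

theorem rescaled_projection_tendsto_H_general
    (n : ℕ)
    (D : Matrix (Fin n) (Fin n) ℝ) (hDdet : IsUnit D.det)
    (hD1 : ones n ⬝ᵥ D⁻¹.mulVec (ones n) ≠ 0)
    (ν : ℝ → ℝ) (hνpos : ∀ ξ > 0, 0 < ν ξ)
    (hν0 : Tendsto ν (𝓝[>] 0) (𝓝 0))
    (Sg : ℝ → Matrix (Fin n) (Fin n) ℝ)
    (E : ℝ → Matrix (Fin n) (Fin n) ℝ)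
    (hE : ∀ i j, Tendsto (fun ξ => E ξ i j) (𝓝[>] 0) (𝓝 0))
    (hdecomp : ∀ ξ > 0, Sg ξ = vecMulVec (ones n) (ones n) + ν ξ • (D + E ξ))
    (X : Fin n → ℝ) (hX : X ⬝ᵥ (Gmat D).mulVec X ≠ 0) :
    (∀ i j,
      Tendsto
        (fun ξ =>
          ν ξ *
            ((X ⬝ᵥ (Sg ξ)⁻¹.mulVec X)⁻¹ •
              ((Sg ξ)⁻¹ * vecMulVec X X * (Sg ξ)⁻¹)) i j)
        (𝓝[>] 0) (𝓝 (Hmat D X i j))) ∧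
    Hmat D X ≠ 0 := by
  have hM : Tendsto (fun ξ => D + E ξ) (𝓝[>] 0) (𝓝 D) := by
    have hE₀ : Tendsto E (𝓝[>] 0) (𝓝 0) := tendsto_pi_nhds.2 fun i => tendsto_pi_nhds.2 (hE i)
    simpa using (tendsto_const_nhds (x := D)).add hE₀
  have hνSg : Tendsto (fun ξ => ν ξ • (Sg ξ)⁻¹) (𝓝[>] 0) (𝓝 (Gmat D)) := by
    refine (tendsto_smul_inv_vecMulVec_add_smul hν0 ?_ hM hDdet hD1).congr' ?_
    · filter_upwards [self_mem_nhdsWithin] with ξ hξ using (hνpos ξ hξ).ne'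
    · filter_upwards [self_mem_nhdsWithin] with ξ hξ
      rw [hdecomp ξ hξ]
  have hH : Tendsto (fun ξ => ν ξ • glsMatrix X (Sg ξ)⁻¹) (𝓝[>] 0) (𝓝 (Hmat D X)) := by
    have h := (continuousAt_glsMatrix hX).tendsto.comp hνSg
    simp only [Function.comp_def, glsMatrix_smul] at h
    exact h
  exact ⟨fun i j => tendsto_pi_nhds.1 (tendsto_pi_nhds.1 hH i) j, glsMatrix_ne_zero hX⟩

/-- as ξ → 0⁺, ν(ξ)·Σ(ξ)⁻¹X(X'Σ(ξ)⁻¹X)⁻¹X'Σ(ξ)⁻¹ converges entrywise to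
H = GXX'G/(X'GX), and H ≠ 0. -/
theorem rescaled_projection_tendsto_H
    (n : ℕ) (hn : 2 ≤ n)
    (D : Matrix (Fin n) (Fin n) ℝ) (hDsymm : D.IsSymm) (hDdet : IsUnit D.det)
    (hD1 : ones n ⬝ᵥ D⁻¹.mulVec (ones n) ≠ 0)
    (ν : ℝ → ℝ) (hνpos : ∀ ξ > 0, 0 < ν ξ)
    (hν0 : Tendsto ν (𝓝[>] 0) (𝓝 0))
    (Sg : ℝ → Matrix (Fin n) (Fin n) ℝ) (hpd : ∀ ξ > 0, (Sg ξ).PosDef)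
    (E : ℝ → Matrix (Fin n) (Fin n) ℝ)
    (hE : ∀ i j, Tendsto (fun ξ => E ξ i j) (𝓝[>] 0) (𝓝 0))
    (hdecomp : ∀ ξ > 0, Sg ξ = vecMulVec (ones n) (ones n) + ν ξ • (D + E ξ))
    (X : Fin n → ℝ) (hX : X ⬝ᵥ (Gmat D).mulVec X ≠ 0) :
    (∀ i j,
      Tendsto
        (fun ξ =>
          ν ξ *
            ((X ⬝ᵥ (Sg ξ)⁻¹.mulVec X)⁻¹ •
              ((Sg ξ)⁻¹ * vecMulVec X X * (Sg ξ)⁻¹)) i j)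
        (𝓝[>] 0) (𝓝 (Hmat D X i j))) ∧
    Hmat D X ≠ 0 :=
  rescaled_projection_tendsto_H_general n D hDdet hD1 ν hνpos hν0 Sg E hE hdecomp X hX
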